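/- Let ρ be a density operator on a Hilbert space H and P a positive operator with P ≤ 1 (identity) and tr(Pρ) > 0. Then the fidelity F(ρ, √P ρ √P / tr(Pρ)) ≥ √(tr(Pρ)). -/

import Mathlib

open scoped ComplexOrder

/-- The trace norm (Schatten 1-norm) of a complex matrix: the trace of `√(Aᴴ A)`. -/
noncomputable def traceNorm {n : Type*} [Fintype n] [DecidableEq n]
    (A : Matrix n n ℂ) : ℝ :=
  ((Matrix.posSemidef_conjTranspose_mul_self A).1.eigenvectorUnitary.1 *
    Matrix.diagonal ((fun x : ℝ => (x : ℂ)) ∘ Real.sqrt ∘ (Matrix.posSemidef_conjTranspose_mul_self A).1.eigenvalues) *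
    (star (Matrix.posSemidef_conjTranspose_mul_self A).1.eigenvectorUnitary : Matrix n n ℂ)).trace.re

open Classical in
/-- Square root of a positive semidefinite matrix (junk value `0` otherwise). -/
noncomputable def matSqrt {n : Type*} [Fintype n] [DecidableEq n]
    (A : Matrix n n ℂ) : Matrix n n ℂ :=
  if h : A.PosSemidef then h.1.eigenvectorUnitary.1 *
    Matrix.diagonal ((fun x : ℝ => (x : ℂ)) ∘ Real.sqrt ∘ h.1.eigenvalues) * (star h.1.eigenvectorUnitary : Matrix n n ℂ) else 0

/-- The fidelity `F(ρ,σ) = ‖√ρ √σ‖₁` between two density matrices. -/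
noncomputable def fidelity {n : Type*} [Fintype n] [DecidableEq n]
    (ρ σ : Matrix n n ℂ) : ℝ :=
  traceNorm (matSqrt ρ * matSqrt σ)

/-! Write `Q = √P`. Since `0 ≤ P ≤ 1`, the spectral calculus gives `P ≤ Q`, hence
`tr(Pρ) ≤ tr(Qρ)`. For `M = √ρ √(QρQ)` we have `M Mᴴ = (√ρ Q √ρ)²`, and `tr √(Mᴴ M) = tr √(M Mᴴ)`
because `Mᴴ M` and `M Mᴴ` have the same characteristic polynomial; so `F(ρ, QρQ) = tr(Qρ)`.
Rescaling by `tr(Pρ)⁻¹` gives `F = tr(Qρ) / √tr(Pρ) ≥ √tr(Pρ)`. -/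

open scoped MatrixOrder

namespace CFC

variable {A : Type*} [PartialOrder A] [Ring A] [StarRing A] [TopologicalSpace A]
  [Algebra ℝ A] [ContinuousFunctionalCalculus ℝ A IsSelfAdjoint] [NonnegSpectrumClass ℝ A]
  [StarOrderedRing A] [IsSemitopologicalRing A] [T2Space A]

lemma sqrt_eq_cfc_real_sqrt {a : A} (ha : 0 ≤ a) : CFC.sqrt a = cfc Real.sqrt a := by
  rw [sqrt_eq_real_sqrt a ha, cfcₙ_eq_cfc]

lemma le_sqrt_of_le_one {a : A} (ha₀ : 0 ≤ a) (ha₁ : a ≤ 1) : a ≤ CFC.sqrt a := by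
  have hspec : ∀ x ∈ spectrum ℝ a, x ≤ 1 := by
    rw [← le_algebraMap_iff_spectrum_le, map_one]
    exact ha₁
  rw [sqrt_eq_cfc_real_sqrt ha₀]
  nth_rw 1 [← cfc_id ℝ a]
  refine cfc_mono fun x hx => ?_
  have hx₀ : 0 ≤ x := spectrum_nonneg_of_nonneg ha₀ hx
  show x ≤ √x
  exact Real.le_sqrt_of_sq_le (by nlinarith [hspec x hx])

lemma sqrt_smul [StarModule ℝ A] {r : ℝ} (hr : 0 ≤ r) {a : A} (ha : 0 ≤ a) :
    CFC.sqrt (r • a) = √r • CFC.sqrt a :=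
  sqrt_unique (by rw [smul_mul_smul_comm, Real.mul_self_sqrt hr, sqrt_mul_sqrt_self a])
    (smul_nonneg (Real.sqrt_nonneg r) (sqrt_nonneg a))

end CFC

namespace Matrix

variable {n : Type*} [Fintype n] [DecidableEq n]

lemma IsHermitian.cfc_sqrt_eq {A : Matrix n n ℂ} (hA : A.IsHermitian) :
    cfc Real.sqrt A = hA.eigenvectorUnitary.1 *
      diagonal ((fun x : ℝ => (x : ℂ)) ∘ Real.sqrt ∘ hA.eigenvalues) *
      (star hA.eigenvectorUnitary : Matrix n n ℂ) := by
  rw [hA.cfc_eq, IsHermitian.cfc, Unitary.conjStarAlgAut_apply]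
  rfl

lemma matSqrt_eq_sqrt {A : Matrix n n ℂ} (hA : A.PosSemidef) : matSqrt A = CFC.sqrt A := by
  rw [matSqrt, dif_pos hA, CFC.sqrt_eq_cfc_real_sqrt hA.nonneg, hA.1.cfc_sqrt_eq]

lemma traceNorm_eq_re_trace_sqrt (M : Matrix n n ℂ) :
    traceNorm M = (CFC.sqrt (Mᴴ * M)).trace.re := by
  have hM := posSemidef_conjTranspose_mul_self M
  rw [traceNorm, CFC.sqrt_eq_cfc_real_sqrt hM.nonneg, hM.1.cfc_sqrt_eq]

lemma IsHermitian.trace_cfc {A : Matrix n n ℂ} (hA : A.IsHermitian) (f : ℝ → ℝ) :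
    (cfc f A).trace = (A.charpoly.roots.map fun z => ((f z.re : ℝ) : ℂ)).sum := by
  rw [hA.cfc_eq, IsHermitian.cfc, Unitary.conjStarAlgAut_apply, trace_mul_cycle,
    Unitary.coe_star_mul_self, one_mul, trace_diagonal, hA.roots_charpoly_eq_eigenvalues,
    Multiset.map_map]
  simp

lemma trace_cfc_mul_comm {A B : Matrix n n ℂ} (hAB : (A * B).IsHermitian)
    (hBA : (B * A).IsHermitian) (f : ℝ → ℝ) :
    (cfc f (A * B)).trace = (cfc f (B * A)).trace := by
  rw [hAB.trace_cfc, hBA.trace_cfc, charpoly_mul_comm]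

lemma traceNorm_eq_re_trace_sqrt_mul_conjTranspose (M : Matrix n n ℂ) :
    traceNorm M = (CFC.sqrt (M * Mᴴ)).trace.re := by
  have h₁ := posSemidef_conjTranspose_mul_self M
  have h₂ := posSemidef_self_mul_conjTranspose M
  rw [traceNorm_eq_re_trace_sqrt, CFC.sqrt_eq_cfc_real_sqrt h₁.nonneg,
    CFC.sqrt_eq_cfc_real_sqrt h₂.nonneg, trace_cfc_mul_comm h₁.1 h₂.1]

lemma traceNorm_smul {r : ℝ} (hr : 0 ≤ r) (M : Matrix n n ℂ) :
    traceNorm (r • M) = r * traceNorm M := by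
  rw [traceNorm_eq_re_trace_sqrt, traceNorm_eq_re_trace_sqrt, conjTranspose_smul, star_trivial,
    smul_mul_smul_comm,
    CFC.sqrt_smul (mul_nonneg hr hr) (posSemidef_conjTranspose_mul_self M).nonneg,
    Real.sqrt_mul_self hr, trace_smul, Complex.smul_re, smul_eq_mul]

lemma fidelity_smul_right (ρ : Matrix n n ℂ) {σ : Matrix n n ℂ} (hσ : σ.PosSemidef) {r : ℝ}
    (hr : 0 ≤ r) : fidelity ρ (r • σ) = √r * fidelity ρ σ := by
  rw [fidelity, fidelity, matSqrt_eq_sqrt (hσ.smul hr), matSqrt_eq_sqrt hσ,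
    CFC.sqrt_smul hr hσ.nonneg, mul_smul_comm, traceNorm_smul (Real.sqrt_nonneg r)]

lemma fidelity_conj_right {ρ Q : Matrix n n ℂ} (hρ : ρ.PosSemidef) (hQ : Q.PosSemidef) :
    fidelity ρ (Q * ρ * Q) = (Q * ρ).trace.re := by
  set R := CFC.sqrt ρ
  have hR : 0 ≤ R := CFC.sqrt_nonneg ρ
  have hT : 0 ≤ Q * ρ * Q := conjugate_nonneg_of_nonneg hρ.nonneg hQ.nonneg
  have hRQR : 0 ≤ R * Q * R := conjugate_nonneg_of_nonneg hQ.nonneg hR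
  have hsq : R * CFC.sqrt (Q * ρ * Q) * (R * CFC.sqrt (Q * ρ * Q))ᴴ
      = (R * Q * R) * (R * Q * R) := by
    rw [conjTranspose_mul, ← star_eq_conjTranspose, ← star_eq_conjTranspose,
      (CFC.sqrt_nonneg _).isSelfAdjoint.star_eq, hR.isSelfAdjoint.star_eq]
    calc R * CFC.sqrt (Q * ρ * Q) * (CFC.sqrt (Q * ρ * Q) * R)
        = R * (CFC.sqrt (Q * ρ * Q) * CFC.sqrt (Q * ρ * Q)) * R := by noncomm_ring
      _ = R * Q * (R * R) * Q * R := by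
        rw [CFC.sqrt_mul_sqrt_self _ hT, CFC.sqrt_mul_sqrt_self ρ hρ.nonneg]
        noncomm_ring
      _ = (R * Q * R) * (R * Q * R) := by noncomm_ring
  rw [fidelity, matSqrt_eq_sqrt hρ, matSqrt_eq_sqrt (nonneg_iff_posSemidef.mp hT),
    traceNorm_eq_re_trace_sqrt_mul_conjTranspose, hsq, CFC.sqrt_mul_self _ hRQR, trace_mul_cycle,
    CFC.sqrt_mul_sqrt_self ρ hρ.nonneg, trace_mul_comm]

lemma trace_mul_nonneg {A B : Matrix n n ℂ} (hA : 0 ≤ A) (hB : 0 ≤ B) : 0 ≤ (A * B).trace := by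
  have h : 0 ≤ CFC.sqrt B * A * CFC.sqrt B := conjugate_nonneg_of_nonneg hA (CFC.sqrt_nonneg B)
  rw [← CFC.sqrt_mul_sqrt_self B hB, ← mul_assoc, trace_mul_cycle]
  exact (nonneg_iff_posSemidef.mp h).trace_nonneg

lemma trace_mul_le_trace_mul {A B ρ : Matrix n n ℂ} (hAB : A ≤ B) (hρ : 0 ≤ ρ) :
    (A * ρ).trace ≤ (B * ρ).trace := by
  have h := trace_mul_nonneg (sub_nonneg.mpr hAB) hρ
  rwa [sub_mul, trace_sub, sub_nonneg] at h

end Matrix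

theorem stmt2_general {d : Type*} [Fintype d] [DecidableEq d]
    (ρ P : Matrix d d ℂ)
    (hρ : ρ.PosSemidef)
    (hP : P.PosSemidef) (hPle : (1 - P).PosSemidef)
    (htr : 0 < ((P * ρ).trace).re) :
    Real.sqrt (((P * ρ).trace).re) ≤
      fidelity ρ (((P * ρ).trace)⁻¹ • (matSqrt P * ρ * matSqrt P)) := by
  set c := ((P * ρ).trace).re
  have hc : (P * ρ).trace = c := Complex.eq_re_of_ofReal_le (r := 0) <| by
    simpa using Matrix.trace_mul_nonneg hP.nonneg hρ.nonneg
  have hQ : (CFC.sqrt P).PosSemidef := Matrix.nonneg_iff_posSemidef.mp (CFC.sqrt_nonneg P)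
  have hQρQ : (CFC.sqrt P * ρ * CFC.sqrt P).PosSemidef :=
    Matrix.nonneg_iff_posSemidef.mp (conjugate_nonneg_of_nonneg hρ.nonneg hQ.nonneg)
  have hmono : c ≤ (CFC.sqrt P * ρ).trace.re := (Complex.le_def.mp <|
    Matrix.trace_mul_le_trace_mul (CFC.le_sqrt_of_le_one hP.nonneg hPle) hρ.nonneg).1
  rw [hc, ← Complex.ofReal_inv, Complex.coe_smul, Matrix.matSqrt_eq_sqrt hP,
    Matrix.fidelity_smul_right ρ hQρQ (inv_nonneg.mpr htr.le), Matrix.fidelity_conj_right hρ hQ]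
  calc √c = √c⁻¹ * c := by
        rw [Real.sqrt_inv, eq_inv_mul_iff_mul_eq₀ (Real.sqrt_pos.mpr htr).ne',
          Real.mul_self_sqrt htr.le]
    _ ≤ √c⁻¹ * (CFC.sqrt P * ρ).trace.re := mul_le_mul_of_nonneg_left hmono (Real.sqrt_nonneg _)

/-- Winter's gentle measurement lemma: if `ρ` is a density operator and `P` a positive
operator with `P ≤ 1` and `tr(Pρ) > 0`, then `F(ρ, √P ρ √P / tr(Pρ)) ≥ √(tr(Pρ))`. -/
theorem stmt2 {d : Type*} [Fintype d] [DecidableEq d]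
    (ρ P : Matrix d d ℂ)
    (hρ : ρ.PosSemidef) (hρ1 : ρ.trace = 1)
    (hP : P.PosSemidef) (hPle : (1 - P).PosSemidef)
    (htr : 0 < ((P * ρ).trace).re) :
    Real.sqrt (((P * ρ).trace).re) ≤
      fidelity ρ (((P * ρ).trace)⁻¹ • (matSqrt P * ρ * matSqrt P)) :=
  stmt2_general ρ P hρ hP hPle htr
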